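/- arXiv:2403.14949 — 2 statements merged into one kernel-verified Lean document; each statement's English description precedes it below -/
import Mathlib

section
/- Let Σ be a symmetric positive definite d×d real matrix, Σ_A a symmetric positive definite d×d matrix, z_A ∈ ℝ^d, and define w_* = Σ⁻¹z_A, w_A = Σ_A⁻¹z_A, and the gap matrix Δ = Σ^{-1/2}(Σ - Σ_A)Σ^{-1/2}. If the spectral norm ‖Δ‖₂ ≤ 1/2, then (w_* - w_A)ᵀ Σ (w_* - w_A) ≤ 4 ‖Δ‖₂² · (z_Aᵀ Σ⁻¹ z_A). -/
/-!
Let `S` be the symmetric square root of `Σ`, so that `Σ = S S` and `Σ_A = S (1 - Δ) S`. Then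
`S (Σ⁻¹ - Σ_A⁻¹) S = 1 - (1 - Δ)⁻¹`, whose operator norm is at most `‖Δ‖ / (1 - ‖Δ‖) ≤ 2 ‖Δ‖`.
In the coordinates `u = S⁻¹ z` both quadratic forms become squared Euclidean norms:
`(w_* - w_A)ᵀ Σ (w_* - w_A) = |S (Σ⁻¹ - Σ_A⁻¹) S u|²` and `z_Aᵀ Σ⁻¹ z_A = |u|²`.
-/

open Matrix
open scoped Matrix.Norms.L2Operator

lemma norm_sub_one_mul_one_sub_norm_le {R : Type*} [NormedRing R] {N Δ : R}
    (h : N * (1 - Δ) = 1) : ‖N - 1‖ * (1 - ‖Δ‖) ≤ ‖Δ‖ := by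
  have hN : N - 1 = (N - 1) * Δ + Δ := by
    calc N - 1 = N - N * (1 - Δ) := by rw [h]
      _ = (N - 1) * Δ + Δ := by noncomm_ring
  have := norm_add_le ((N - 1) * Δ) Δ
  rw [← hN] at this
  nlinarith [norm_mul_le (N - 1) Δ]

namespace Matrix

variable {n : Type*} [Fintype n]

noncomputable def IsHermitian.spectralSqrt [DecidableEq n] {A : Matrix n n ℝ} (hA : A.IsHermitian) :
    Matrix n n ℝ :=
  hA.eigenvectorUnitary.1 * diagonal ((↑) ∘ (√·) ∘ hA.eigenvalues) *
    (star hA.eigenvectorUnitary : Matrix n n ℝ)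

lemma IsHermitian.transpose_spectralSqrt [DecidableEq n] {A : Matrix n n ℝ}
    (hA : A.IsHermitian) : hA.spectralSqrtᵀ = hA.spectralSqrt := by
  simp [spectralSqrt, transpose_mul, Matrix.mul_assoc, star_eq_conjTranspose]

lemma PosSemidef.spectralSqrt_mul_self [DecidableEq n] {A : Matrix n n ℝ} (hA : A.PosSemidef) :
    hA.1.spectralSqrt * hA.1.spectralSqrt = A := by
  set U : Matrix n n ℝ := hA.1.eigenvectorUnitary.1
  have hU : star U * U = 1 := Unitary.coe_star_mul_self _
  have hD : diagonal ((fun x : ℝ => x) ∘ (√·) ∘ hA.1.eigenvalues) *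
      diagonal ((fun x : ℝ => x) ∘ (√·) ∘ hA.1.eigenvalues) =
      diagonal (RCLike.ofReal ∘ hA.1.eigenvalues) := by
    rw [diagonal_mul_diagonal]
    congr 1
    funext i
    simp [Real.mul_self_sqrt (hA.eigenvalues_nonneg i)]
  conv_rhs => rw [hA.1.spectral_theorem, Unitary.conjStarAlgAut_apply, ← hD]
  simp only [IsHermitian.spectralSqrt, Matrix.mul_assoc]
  rw [← Matrix.mul_assoc (star U) U, hU, Matrix.one_mul]

lemma conj_inv_mul_one_sub_eq_one [DecidableEq n] {α : Type*} [CommRing α] {S A : Matrix n n α}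
    (hS : IsUnit S.det) (hA : IsUnit A.det) :
    S * A⁻¹ * S * (1 - S⁻¹ * (S * S - A) * S⁻¹) = 1 := by
  simp [Matrix.mul_sub, Matrix.sub_mul, Matrix.mul_assoc, hS, hA]

lemma conj_inv_mul_self_eq_one [DecidableEq n] {α : Type*} [CommRing α] {S : Matrix n n α}
    (hS : IsUnit S.det) : S * (S * S)⁻¹ * S = 1 := by
  simp [Matrix.mul_inv_rev, hS]

lemma norm_conj_inv_sub_inv_mul_le [DecidableEq n] {𝕜 : Type*} [RCLike 𝕜] {S A : Matrix n n 𝕜}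
    (hS : IsUnit S.det) (hA : IsUnit A.det) :
    ‖S * ((S * S)⁻¹ - A⁻¹) * S‖ * (1 - ‖S⁻¹ * (S * S - A) * S⁻¹‖) ≤
      ‖S⁻¹ * (S * S - A) * S⁻¹‖ := by
  have h := norm_sub_one_mul_one_sub_norm_le (conj_inv_mul_one_sub_eq_one hS hA)
  rw [Matrix.mul_sub, Matrix.sub_mul, conj_inv_mul_self_eq_one hS, ← norm_neg, neg_sub]
  exact h

lemma dotProduct_self_eq_norm_sq (x : n → ℝ) : x ⬝ᵥ x = ‖WithLp.toLp 2 x‖ ^ 2 := by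
  rw [← real_inner_self_eq_norm_sq, EuclideanSpace.inner_toLp_toLp, star_trivial]

lemma mulVec_dotProduct_mulVec_self_le {m : Type*} [Fintype m] [DecidableEq n]
    (B : Matrix m n ℝ) (u : n → ℝ) : B *ᵥ u ⬝ᵥ B *ᵥ u ≤ ‖B‖ ^ 2 * (u ⬝ᵥ u) := by
  rw [dotProduct_self_eq_norm_sq, dotProduct_self_eq_norm_sq, ← mul_pow]
  exact pow_le_pow_left₀ (norm_nonneg _) (l2_opNorm_mulVec B (WithLp.toLp 2 u)) 2

lemma dotProduct_transpose_mul_mulVec (S : Matrix n n ℝ) (v : n → ℝ) :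
    v ⬝ᵥ (Sᵀ * S) *ᵥ v = S *ᵥ v ⬝ᵥ S *ᵥ v := by
  rw [← mulVec_mulVec, dotProduct_mulVec, vecMul_transpose]

lemma mulVec_dotProduct_mul_self_mulVec_le [DecidableEq n] {S : Matrix n n ℝ}
    (hS : IsUnit S.det) (hSt : Sᵀ = S) (M : Matrix n n ℝ) (z : n → ℝ) :
    M *ᵥ z ⬝ᵥ (S * S) *ᵥ (M *ᵥ z) ≤ ‖S * M * S‖ ^ 2 * (z ⬝ᵥ (S * S)⁻¹ *ᵥ z) := by
  have hSM : (S * M * S) *ᵥ (S⁻¹ *ᵥ z) = S *ᵥ (M *ᵥ z) := by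
    simp [mulVec_mulVec, Matrix.mul_assoc, mul_nonsing_inv _ hS]
  have hSinv : (S⁻¹)ᵀ = S⁻¹ := by rw [transpose_nonsing_inv, hSt]
  calc M *ᵥ z ⬝ᵥ (S * S) *ᵥ (M *ᵥ z) = S *ᵥ (M *ᵥ z) ⬝ᵥ S *ᵥ (M *ᵥ z) := by
        rw [← dotProduct_transpose_mul_mulVec, hSt]
    _ ≤ ‖S * M * S‖ ^ 2 * (S⁻¹ *ᵥ z ⬝ᵥ S⁻¹ *ᵥ z) := by
        rw [← hSM]
        exact mulVec_dotProduct_mulVec_self_le _ _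
    _ = ‖S * M * S‖ ^ 2 * (z ⬝ᵥ (S * S)⁻¹ *ᵥ z) := by
        rw [← dotProduct_transpose_mul_mulVec, hSinv, Matrix.mul_inv_rev]

end Matrix

theorem stmt0 {d : ℕ} (Sig SigA : Matrix (Fin d) (Fin d) ℝ)
    (hSig : Sig.PosDef) (hSigA : SigA.PosDef) (z : Fin d → ℝ)
    (wstar wA : Fin d → ℝ)
    (hwstar : wstar = Sig⁻¹.mulVec z) (hwA : wA = SigA⁻¹.mulVec z)
    (Δ : Matrix (Fin d) (Fin d) ℝ)
    (hΔdef : Δ = (hSig.posSemidef.1.eigenvectorUnitary.1 * diagonal ((↑) ∘ (√·) ∘ hSig.posSemidef.1.eigenvalues) *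
        (star hSig.posSemidef.1.eigenvectorUnitary : Matrix (Fin d) (Fin d) ℝ))⁻¹ * (Sig - SigA) *
      (hSig.posSemidef.1.eigenvectorUnitary.1 * diagonal ((↑) ∘ (√·) ∘ hSig.posSemidef.1.eigenvalues) *
        (star hSig.posSemidef.1.eigenvectorUnitary : Matrix (Fin d) (Fin d) ℝ))⁻¹)
    (hΔ : ‖Δ‖ ≤ 1 / 2) :
    (wstar - wA) ⬝ᵥ Sig.mulVec (wstar - wA) ≤ 4 * ‖Δ‖ ^ 2 * (z ⬝ᵥ Sig⁻¹.mulVec z) := by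
  set S := hSig.posSemidef.1.spectralSqrt
  have hSS : S * S = Sig := hSig.posSemidef.spectralSqrt_mul_self
  have hS : IsUnit S.det := by
    refine isUnit_of_mul_isUnit_left (y := S.det) ?_
    rw [← det_mul, hSS]
    exact hSig.isUnit.map detMonoidHom
  have hB : ‖S * (Sig⁻¹ - SigA⁻¹) * S‖ ≤ 2 * ‖Δ‖ := by
    have h := norm_conj_inv_sub_inv_mul_le hS (hSigA.isUnit.map detMonoidHom)
    have hΔS : Δ = S⁻¹ * (Sig - SigA) * S⁻¹ := hΔdef
    rw [hSS, ← hΔS] at h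
    nlinarith [norm_nonneg (S * (Sig⁻¹ - SigA⁻¹) * S)]
  rw [hwstar, hwA, ← sub_mulVec]
  calc _ ≤ ‖S * (Sig⁻¹ - SigA⁻¹) * S‖ ^ 2 * (z ⬝ᵥ Sig⁻¹ *ᵥ z) := by
        simpa only [hSS] using
          mulVec_dotProduct_mul_self_mulVec_le hS hSig.posSemidef.1.transpose_spectralSqrt _ z
    _ ≤ (2 * ‖Δ‖) ^ 2 * (z ⬝ᵥ Sig⁻¹ *ᵥ z) := by
        gcongr
        exact hSig.inv.posSemidef.dotProduct_mulVec_nonneg z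
    _ = 4 * ‖Δ‖ ^ 2 * (z ⬝ᵥ Sig⁻¹ *ᵥ z) := by ring
end

section
/- Let γ ∈ (0,1), α ≥ β > 0, and set τ = (1-γ)β + γα. Let U ∈ ℝ^{d×k} have orthonormal columns (k < d) and ν ∈ ℝ^k with ν_i > 0 and max_i ν_i ∈ [α - β, 2(α - β)]. Define Σ_A = βI + U diag(ν) Uᵀ, Σ_B = αI, Σ = (1-γ)Σ_A + γΣ_B, and Δ(Σ_A) = γ Σ^{-1/2}(Σ_B - Σ_A)Σ^{-1/2}. Then the spectral norm ‖Δ(Σ_A)‖₂ = γ(α - β)/τ. -/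
open Matrix
open scoped Matrix.Norms.L2Operator

/-- The square root of a positive semidefinite matrix, as defined in the older Mathlib. -/
noncomputable def Matrix.PosSemidef.sqrt {n : Type*} [Fintype n] [DecidableEq n]
    {A : Matrix n n ℝ} (hA : A.PosSemidef) : Matrix n n ℝ :=
  hA.1.eigenvectorUnitary.1 * diagonal ((↑) ∘ (√·) ∘ hA.1.eigenvalues) *
  (star hA.1.eigenvectorUnitary : Matrix n n ℝ)

section auxFM
variable {d k : ℕ}

/-- Matrices of the form `a • (1 - U Uᵀ) + U (diag f) Uᵀ`. -/
noncomputable def FM (U : Matrix (Fin d) (Fin k) ℝ) (a : ℝ) (f : Fin k → ℝ) :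
    Matrix (Fin d) (Fin d) ℝ :=
  a • (1 - U * Uᵀ) + U * Matrix.diagonal f * Uᵀ

variable (U : Matrix (Fin d) (Fin k) ℝ)

lemma FM_mul (hU : Uᵀ * U = 1) (a b : ℝ) (f g : Fin k → ℝ) :
    FM U a f * FM U b g = FM U (a*b) (f*g) := by
  have hk : ∀ {m : Type} [Fintype m] (X : Matrix (Fin k) m ℝ), Uᵀ * (U * X) = X := by
    intro m _ X; rw [← Matrix.mul_assoc, hU, Matrix.one_mul]
  have h1 : (U * Uᵀ) * (U * Matrix.diagonal g * Uᵀ) = U * Matrix.diagonal g * Uᵀ := by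
    simp only [Matrix.mul_assoc]; rw [hk]
  have h2 : (U * Matrix.diagonal f * Uᵀ) * (U * Uᵀ) = U * Matrix.diagonal f * Uᵀ := by
    simp only [Matrix.mul_assoc]; rw [hk]
  have h3 : (U * Matrix.diagonal f * Uᵀ) * (U * Matrix.diagonal g * Uᵀ)
      = U * Matrix.diagonal (f*g) * Uᵀ := by
    have : Matrix.diagonal (f*g) = Matrix.diagonal f * Matrix.diagonal g := by
      rw [Matrix.diagonal_mul_diagonal]; rfl
    rw [this]
    simp only [Matrix.mul_assoc]; rw [hk]
  have h4 : (U*Uᵀ) * (U*Uᵀ) = U * Uᵀ := by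
    simp only [Matrix.mul_assoc]; rw [hk]
  unfold FM
  simp only [mul_add, add_mul, smul_mul_assoc, mul_smul_comm, sub_mul, mul_sub,
    one_mul, mul_one, h1, h2, h3, h4, smul_sub, smul_smul, smul_add, sub_self,
    smul_zero, sub_zero]
  module

lemma FM_one : FM U 1 (1 : Fin k → ℝ) = 1 := by
  unfold FM
  have : Matrix.diagonal (1 : Fin k → ℝ) = 1 := Matrix.diagonal_one
  rw [this, Matrix.mul_one, one_smul]
  abel

lemma FM_eq (a : ℝ) (f : Fin k → ℝ) :
    FM U a f = a • (1 : Matrix (Fin d) (Fin d) ℝ)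
      + U * Matrix.diagonal (fun i => f i - a) * Uᵀ := by
  unfold FM
  have h : Matrix.diagonal (fun i => f i - a)
      = Matrix.diagonal f - a • (1 : Matrix (Fin k) (Fin k) ℝ) := by
    ext i j
    rcases eq_or_ne i j with h | h <;>
      simp [Matrix.diagonal_apply, Matrix.one_apply, h]
  rw [h, Matrix.mul_sub, Matrix.sub_mul, Matrix.mul_smul, Matrix.smul_mul, Matrix.mul_one,
    smul_sub]
  abel

lemma FM_smul (c a : ℝ) (f : Fin k → ℝ) : c • FM U a f = FM U (c*a) (c • f) := by
  unfold FM
  rw [smul_add, smul_smul]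
  congr 1
  rw [Matrix.diagonal_smul, Matrix.mul_smul, Matrix.smul_mul]

lemma FM_posSemidef (a : ℝ) (f : Fin k → ℝ) (ha : 0 ≤ a) (hf : ∀ i, a ≤ f i) :
    (FM U a f).PosSemidef := by
  rw [FM_eq]
  have h1 : (a • (1 : Matrix (Fin d) (Fin d) ℝ)).PosSemidef := by
    have h : a • (1 : Matrix (Fin d) (Fin d) ℝ) = Matrix.diagonal (fun _ => a) := by
      ext i j
      rcases eq_or_ne i j with h | h <;>
        simp [Matrix.one_apply, Matrix.diagonal_apply, h]
    rw [h]
    exact Matrix.posSemidef_diagonal_iff.mpr (fun _ => ha)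
  have h2 : (U * Matrix.diagonal (fun i => f i - a) * Uᵀ).PosSemidef := by
    have h := (Matrix.posSemidef_diagonal_iff.mpr
      (fun i => sub_nonneg.mpr (hf i))).mul_mul_conjTranspose_same U
    rwa [Matrix.conjTranspose_eq_transpose_of_trivial] at h
  exact h1.add h2

lemma dot_self_nonneg {n : ℕ} (v : Fin n → ℝ) : 0 ≤ v ⬝ᵥ v :=
  Finset.sum_nonneg fun _ _ => mul_self_nonneg _

lemma normsq_euc {n : ℕ} (v : Fin n → ℝ) :
    ‖((WithLp.equiv 2 (Fin n → ℝ)).symm v)‖ ^ 2 = v ⬝ᵥ v := by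
  rw [EuclideanSpace.norm_eq]
  rw [Real.sq_sqrt (by positivity)]
  simp [dotProduct, ← sq, Real.norm_eq_abs, sq_abs]

lemma norm_FM (hU : Uᵀ * U = 1) (hdk : k < d)
    (a : ℝ) (f : Fin k → ℝ) (ha : 0 ≤ a) (hf : ∀ i, |f i| ≤ a) : ‖FM U a f‖ = a := by
  have hUdot : ∀ z : Fin k → ℝ, (U *ᵥ z) ⬝ᵥ (U *ᵥ z) = z ⬝ᵥ z := by
    intro z
    rw [Matrix.dotProduct_mulVec, Matrix.vecMul_mulVec, hU, Matrix.vecMul_one]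
  have hWdot : ∀ (w : Fin d → ℝ) (z : Fin k → ℝ), Uᵀ *ᵥ w = 0 → w ⬝ᵥ (U *ᵥ z) = 0 := by
    intro w z hw
    rw [Matrix.dotProduct_mulVec, ← Matrix.mulVec_transpose, hw, zero_dotProduct]
  have hFMv : ∀ x : Fin d → ℝ, FM U a f *ᵥ x
      = a • (x - U *ᵥ (Uᵀ *ᵥ x)) + U *ᵥ (fun i => f i * (Uᵀ *ᵥ x) i) := by
    intro x
    unfold FM
    rw [Matrix.add_mulVec, Matrix.smul_mulVec, Matrix.sub_mulVec, Matrix.one_mulVec]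
    congr 1
    · rw [← Matrix.mulVec_mulVec]
    · rw [← Matrix.mulVec_mulVec, ← Matrix.mulVec_mulVec]
      have hd : Matrix.diagonal f *ᵥ (Uᵀ *ᵥ x) = fun i => f i * (Uᵀ *ᵥ x) i := by
        ext i
        exact Matrix.mulVec_diagonal _ _ _
      rw [hd]
  -- upper bound
  have hub : ‖FM U a f‖ ≤ a := by
    rw [Matrix.l2_opNorm_def]
    apply ContinuousLinearMap.opNorm_le_bound _ ha
    intro x
    set xv : Fin d → ℝ := WithLp.equiv 2 (Fin d → ℝ) x with hxv
    have hx : x = (WithLp.equiv 2 (Fin d → ℝ)).symm xv := rfl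
    set y : Fin k → ℝ := Uᵀ *ᵥ xv with hy
    set z : Fin k → ℝ := fun i => f i * y i with hz
    set w : Fin d → ℝ := xv - U *ᵥ y with hw
    have hker : Uᵀ *ᵥ w = 0 := by
      rw [hw, Matrix.mulVec_sub, Matrix.mulVec_mulVec, hU, Matrix.one_mulVec, sub_self]
    have happ : ‖(LinearEquiv.trans Matrix.toEuclideanLin LinearMap.toContinuousLinearMap
        (FM U a f)) x‖ = ‖(WithLp.equiv 2 (Fin d → ℝ)).symm (FM U a f *ᵥ xv)‖ := rfl
    rw [happ]
    have key : (FM U a f *ᵥ xv) ⬝ᵥ (FM U a f *ᵥ xv) ≤ a^2 * (xv ⬝ᵥ xv) := by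
      rw [hFMv xv, ← hy, ← hz]
      have hxv2 : xv = w + U *ᵥ y := by rw [hw]; ring
      have hcross : w ⬝ᵥ (U *ᵥ z) = 0 := hWdot _ _ hker
      have hcross2 : w ⬝ᵥ (U *ᵥ y) = 0 := hWdot _ _ hker
      have hxdot : xv ⬝ᵥ xv = w ⬝ᵥ w + y ⬝ᵥ y := by
        rw [hxv2, add_dotProduct, dotProduct_add, dotProduct_add,
          hcross2, hUdot y, dotProduct_comm (U *ᵥ y) w, hcross2]
        ring
      have hsum : z ⬝ᵥ z ≤ a^2 * (y ⬝ᵥ y) := by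
        rw [dotProduct, dotProduct, Finset.mul_sum]
        apply Finset.sum_le_sum
        intro i _
        have h1 : z i * z i = (f i)^2 * (y i * y i) := by rw [hz]; ring
        rw [h1]
        have h2 : (f i)^2 ≤ a^2 := by
          rw [← sq_abs]
          exact pow_le_pow_left₀ (abs_nonneg _) (hf i) 2
        nlinarith [mul_self_nonneg (y i)]
      have harg : a • (xv - U *ᵥ y) = a • w := by rw [hw]
      have hexp : (a • w + U *ᵥ z) ⬝ᵥ (a • w + U *ᵥ z)
          = a^2 * (w ⬝ᵥ w) + z ⬝ᵥ z := by
        simp only [add_dotProduct, dotProduct_add, smul_dotProduct,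
          dotProduct_smul, smul_eq_mul]
        rw [hcross, dotProduct_comm (U *ᵥ z) w, hcross, hUdot]
        ring
      rw [harg, hexp, hxdot]
      nlinarith [dot_self_nonneg w]
    have h1 : ‖(WithLp.equiv 2 (Fin d → ℝ)).symm (FM U a f *ᵥ xv)‖^2 ≤ (a * ‖x‖)^2 := by
      rw [normsq_euc]
      have h2 : ‖x‖^2 = xv ⬝ᵥ xv := by rw [hx, normsq_euc]
      calc (FM U a f *ᵥ xv) ⬝ᵥ (FM U a f *ᵥ xv) ≤ a^2 * (xv ⬝ᵥ xv) := key
      _ = (a * ‖x‖)^2 := by rw [← h2]; ring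
    nlinarith [norm_nonneg ((WithLp.equiv 2 (Fin d → ℝ)).symm (FM U a f *ᵥ xv)),
      norm_nonneg x, mul_nonneg ha (norm_nonneg x)]
  -- lower bound
  have hlb : a ≤ ‖FM U a f‖ := by
    obtain ⟨v, hv0, hvker⟩ : ∃ v : Fin d → ℝ, v ≠ 0 ∧ Uᵀ *ᵥ v = 0 := by
      have hni : ¬ Function.Injective (Matrix.mulVecLin Uᵀ) := by
        intro h
        have := LinearMap.finrank_le_finrank_of_injective h
        simp only [Module.finrank_pi, Fintype.card_fin] at this
        omega
      rw [← LinearMap.ker_eq_bot] at hni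
      obtain ⟨v, hv, hv0⟩ := Submodule.exists_mem_ne_zero_of_ne_bot hni
      exact ⟨v, hv0, hv⟩
    have hFv : FM U a f *ᵥ v = a • v := by
      rw [hFMv v, hvker]
      have h0 : (fun i => f i * (0 : Fin k → ℝ) i) = (0 : Fin k → ℝ) := by
        funext i; simp
      rw [h0]; simp
    set v' : EuclideanSpace ℝ (Fin d) := (WithLp.equiv 2 (Fin d → ℝ)).symm v with hv'
    have hle := Matrix.l2_opNorm_mulVec (FM U a f) v'
    have hle' : ‖(WithLp.equiv 2 (Fin d → ℝ)).symm (a • v)‖ ≤ ‖FM U a f‖ * ‖v'‖ := by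
      rw [← hFv]; exact hle
    rw [show (WithLp.equiv 2 (Fin d → ℝ)).symm (a • v) = a • (WithLp.equiv 2 (Fin d → ℝ)).symm v from rfl, norm_smul, Real.norm_eq_abs, abs_of_nonneg ha] at hle'
    have hvpos : 0 < ‖v'‖ := by
      rw [norm_pos_iff]
      intro h
      apply hv0
      have : v = WithLp.equiv 2 (Fin d → ℝ) v' := rfl
      rw [this, h]
      rfl
    exact le_of_mul_le_mul_right hle' hvpos
  linarith

end auxFM

theorem stmt5 {d k : ℕ} (hk : k < d)
    (γ α β τ : ℝ) (hγ0 : 0 < γ) (hγ1 : γ < 1) (hβ : 0 < β) (hαβ : β ≤ α)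
    (hτ : τ = (1 - γ) * β + γ * α)
    (U : Matrix (Fin d) (Fin k) ℝ) (hU : Uᵀ * U = 1)
    (ν : Fin k → ℝ) (hν : ∀ i, 0 < ν i)
    (νmax : ℝ) (hle : ∀ i, ν i ≤ νmax) (hmem : ∃ i, ν i = νmax)
    (hmax1 : α - β ≤ νmax) (hmax2 : νmax ≤ 2 * (α - β))
    (SigA SigB Sig Δ : Matrix (Fin d) (Fin d) ℝ)
    (hSigA : SigA = β • 1 + U * Matrix.diagonal ν * Uᵀ)
    (hSigB : SigB = α • 1)
    (hSigdef : Sig = (1 - γ) • SigA + γ • SigB)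
    (hSig : Sig.PosDef)
    (hΔdef : Δ = γ • ((Matrix.PosSemidef.sqrt hSig.posSemidef)⁻¹ * (SigB - SigA) * (Matrix.PosSemidef.sqrt hSig.posSemidef)⁻¹)) :
    ‖Δ‖ = γ * (α - β) / τ := by
  obtain ⟨i0, hi0⟩ := hmem
  have hab : 0 < α - β := by nlinarith [hν i0, hi0 ▸ hmax2]
  have hτpos : 0 < τ := by rw [hτ]; nlinarith
  have hD : ∀ i, 0 < τ + (1-γ)*ν i := fun i => by nlinarith [hν i]
  have hsqτ : Real.sqrt τ * Real.sqrt τ = τ := Real.mul_self_sqrt hτpos.le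
  have hsqτ0 : Real.sqrt τ ≠ 0 := by positivity
  have hsqD : ∀ i, Real.sqrt (τ + (1-γ)*ν i) * Real.sqrt (τ + (1-γ)*ν i) = τ + (1-γ)*ν i :=
    fun i => Real.mul_self_sqrt (hD i).le
  have hsqD0 : ∀ i, Real.sqrt (τ + (1-γ)*ν i) ≠ 0 := fun i => by
    have := hD i; positivity
  -- Sig in FM form
  have hSigFM : Sig = FM U τ (fun i => τ + (1-γ)*ν i) := by
    rw [FM_eq]
    have hdiag : Matrix.diagonal (fun i => τ + (1-γ)*ν i - τ)
        = (1-γ) • Matrix.diagonal ν := by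
      rw [← Matrix.diagonal_smul]
      exact congrArg Matrix.diagonal (funext fun i => by simp [smul_eq_mul])
    rw [hdiag, hSigdef, hSigA, hSigB, hτ, Matrix.mul_smul, Matrix.smul_mul]
    module
  -- the square root
  set S := FM U (Real.sqrt τ) (fun i => Real.sqrt (τ + (1-γ)*ν i)) with hS
  set T := FM U (Real.sqrt τ)⁻¹ (fun i => (Real.sqrt (τ + (1-γ)*ν i))⁻¹) with hT
  have hSsq : S * S = Sig := by
    rw [hS, FM_mul U hU, hsqτ,
      show ((fun i => Real.sqrt (τ + (1-γ)*ν i)) * fun i => Real.sqrt (τ + (1-γ)*ν i))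
        = (fun i => τ + (1-γ)*ν i) from funext fun i => hsqD i]
    exact hSigFM.symm
  have hSpsd : S.PosSemidef := by
    apply FM_posSemidef U _ _ (Real.sqrt_nonneg τ)
    intro i
    apply Real.sqrt_le_sqrt
    nlinarith [hν i]
  have hsqrt : Matrix.PosSemidef.sqrt hSig.posSemidef = S := by
    open scoped MatrixOrder in
    have h1 : Matrix.PosSemidef.sqrt hSig.posSemidef = cfc Real.sqrt Sig := by
      rw [hSig.posSemidef.1.cfc_eq, IsHermitian.cfc, Unitary.conjStarAlgAut_apply]; rfl
    open scoped MatrixOrder in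
    rw [h1, ← cfcₙ_eq_cfc (a := Sig) (f := Real.sqrt), ← CFC.sqrt_eq_real_sqrt Sig hSig.posSemidef.nonneg]
    open scoped MatrixOrder in
    exact CFC.sqrt_unique hSsq hSpsd.nonneg
  have hST : S * T = 1 := by
    rw [hS, hT, FM_mul U hU, mul_inv_cancel₀ hsqτ0]
    have : (fun i => Real.sqrt (τ + (1-γ)*ν i)) * (fun i => (Real.sqrt (τ + (1-γ)*ν i))⁻¹)
        = (1 : Fin k → ℝ) := by
      funext i
      simp only [Pi.mul_apply, Pi.one_apply]
      exact mul_inv_cancel₀ (hsqD0 i)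
    rw [this, FM_one]
  have hSinv : (Matrix.PosSemidef.sqrt hSig.posSemidef)⁻¹ = T := by
    rw [hsqrt]
    exact Matrix.inv_eq_right_inv hST
  -- middle factor
  have hmid : SigB - SigA = FM U (α-β) (fun i => α - β - ν i) := by
    rw [FM_eq]
    have hdiag : Matrix.diagonal (fun i => α - β - ν i - (α-β))
        = -(Matrix.diagonal ν) := by
      rw [show (fun i => α - β - ν i - (α-β)) = (fun i => -ν i) from funext fun i => by ring]
      exact (Matrix.diagonal_neg ν).symm
    rw [hdiag, hSigB, hSigA, Matrix.mul_neg, Matrix.neg_mul]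
    module
  -- compute Δ
  set a : ℝ := γ * (α - β) / τ with ha
  set f : Fin k → ℝ := fun i => γ * (α - β - ν i) / (τ + (1-γ)*ν i) with hf
  have hΔ : Δ = FM U a f := by
    rw [hΔdef, hSinv, hmid, hT, FM_mul U hU, FM_mul U hU, FM_smul]
    refine congrArg₂ (FM U) ?_ ?_
    · rw [ha]
      have h1 : (Real.sqrt τ)⁻¹ * (α-β) * (Real.sqrt τ)⁻¹
          = (α-β) * (Real.sqrt τ * Real.sqrt τ)⁻¹ := by
        rw [mul_inv]; ring
      rw [h1, hsqτ]
      rw [div_eq_mul_inv]; ring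
    · funext i
      simp only [Pi.smul_apply, Pi.mul_apply, smul_eq_mul, hf]
      have h1 : (Real.sqrt (τ + (1-γ)*ν i))⁻¹ * (α-β-ν i) * (Real.sqrt (τ + (1-γ)*ν i))⁻¹
          = (α-β-ν i) * (Real.sqrt (τ + (1-γ)*ν i) * Real.sqrt (τ + (1-γ)*ν i))⁻¹ := by
        rw [mul_inv]; ring
      rw [h1, hsqD i, div_eq_mul_inv]
      ring
  -- bounds on f
  have hanneg : 0 ≤ a := by rw [ha]; positivity
  have hfb : ∀ i, |f i| ≤ a := by
    intro i
    rw [hf, ha, abs_div, abs_of_pos (hD i), div_le_div_iff₀ (hD i) hτpos, abs_mul,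
      abs_of_pos hγ0]
    have hνi := hν i
    have hν2 : ν i ≤ 2*(α-β) := le_trans (hle i) hmax2
    rcases le_total (ν i) (α - β) with h | h
    · rw [abs_of_nonneg (by linarith)]
      nlinarith [mul_nonneg (mul_nonneg hγ0.le hab.le) (mul_nonneg (by linarith : (0:ℝ) ≤ 1-γ) hνi.le),
        mul_nonneg (mul_nonneg hγ0.le hτpos.le) hνi.le]
    · rw [abs_of_nonpos (by linarith), neg_sub]
      nlinarith [mul_nonneg (mul_nonneg hγ0.le hab.le) (mul_nonneg (by linarith : (0:ℝ) ≤ 1-γ) hνi.le),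
        mul_nonneg (mul_nonneg hγ0.le hτpos.le) (by linarith : 0 ≤ 2*(α-β) - ν i)]
  rw [hΔ, norm_FM U hU hk a f hanneg hfb]
end
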